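/- arXiv:1303.4197 — 2 statements merged into one kernel-verified Lean document; each statement's English description precedes it below -/
import Mathlib

section
/- Let K be a strictly convex centrally symmetric convex body in ℝⁿ and let x₁,…,x_m (m ≥ 2) be points outside the interior of K, with consecutive points distinct, whose convex hull contains 0. If the K-length of the closed polygon x₁⋯x_m equals 4, then m = 2 and x₂ = −x₁ with x₁ ∈ ∂K. -/
open Finset

/-- The `K`-length of the closed polygon with vertices `x 0, …, x (m-1)`. -/
noncomputable def KLength {n : ℕ} (K : Set (EuclideanSpace ℝ (Fin n))) (m : ℕ)
    (x : ℕ → EuclideanSpace ℝ (Fin n)) : ℝ :=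
  ∑ i ∈ Finset.range m, gauge K (x ((i + 1) % m) - x i)

/-!
Place the vertices on the circle `ℝ/ℤ` at their arc-length positions divided by the perimeter `L`.
A chord is no longer than either arc, so `‖x_i - x_j‖ ≤ L · d(t_i, t_j)` with `d` the distance on
`ℝ/ℤ`. The kernel `1/4 - d` is positive definite (its Fourier coefficients are
`(1 - (-1)^k) / (π² k²) ≥ 0`), hence for the convex weights `w` with `∑ w_i x_i = 0`:
`1 ≤ ∑ w_i ‖x_i‖ ≤ ∑ w_i w_j ‖x_i - x_j‖ ≤ L / 4`.
When `L = 4` all of these are equalities, and strict convexity forces every vertex of positive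
weight to be `b` or `-b` for one `b` with `‖b‖ = 1`, both occurring. Every other vertex `v` then has
`‖v - b‖ + ‖v + b‖ ≤ 4 - ‖2b‖ = 2`, so it lies on the segment `[b, -b]` and hence equals `±b`.
Consecutive vertices alternate, every edge has length `2`, and `m = 2`.
-/

open Real Topology

theorem hasSum_one_div_sq_mul_cos (v : ℝ) :
    HasSum (fun k : ℕ => 1 / (k : ℝ) ^ 2 * cos (2 * π * k * v))
      (π ^ 2 * (Int.fract v ^ 2 - Int.fract v + 1 / 6)) := by
  have h := hasSum_one_div_nat_pow_mul_cos one_ne_zero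
    ⟨Int.fract_nonneg v, (Int.fract_lt_one v).le⟩
  convert h using 1
  · funext k
    rw [← Int.self_sub_floor, mul_sub, show 2 * π * k * (⌊v⌋ : ℝ) = ((k * ⌊v⌋ : ℤ) : ℝ) * (2 * π) by
      push_cast; ring, cos_sub_int_mul_two_pi]
    norm_num
  · simp [Polynomial.bernoulli, sum_range_succ]
    ring

theorem norm_coe_unitAddCircle (v : ℝ) :
    ‖(v : UnitAddCircle)‖ = min (Int.fract v) (1 - Int.fract v) := by
  rw [AddCircle.norm_eq, ← abs_sub_round_eq_min]
  simp

theorem hasSum_norm_unitAddCircle (v : ℝ) :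
    HasSum (fun k : ℕ => (1 - (-1) ^ k) / (π ^ 2 * k ^ 2) * cos (2 * π * k * v))
      (1 / 4 - ‖(v : UnitAddCircle)‖) := by
  -- shifting by `1 / 2` flips the sign of the odd modes, so the difference keeps only those
  have h := ((hasSum_one_div_sq_mul_cos v).sub
    (hasSum_one_div_sq_mul_cos (v + 1 / 2))).div_const (π ^ 2)
  convert h using 2 with k
  · rfl
  · rw [show 2 * π * k * (v + 1 / 2) = 2 * π * k * v + k * π by ring, cos_add_nat_mul_pi]
    field_simp
  · have hπ : π ^ 2 ≠ 0 := by positivity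
    have hf0 := Int.fract_nonneg v
    have hf1 := Int.fract_lt_one v
    rw [norm_coe_unitAddCircle]
    rcases lt_or_ge (Int.fract v) (1 / 2) with hf | hf
    · have h : Int.fract (v + 1 / 2) = Int.fract v + 1 / 2 :=
        Int.fract_eq_iff.2 ⟨by linarith, by linarith, ⌊v⌋, by rw [← Int.self_sub_floor]; ring⟩
      rw [h, min_eq_left (by linarith)]
      field_simp
      ring
    · have h : Int.fract (v + 1 / 2) = Int.fract v - 1 / 2 :=
        Int.fract_eq_iff.2 ⟨by linarith, by linarith, ⌊v⌋ + 1, by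
          push_cast; rw [← Int.self_sub_floor]; ring⟩
      rw [h, min_eq_right (by linarith)]
      field_simp
      ring

theorem sum_sum_mul_cos_sub_nonneg {ι : Type*} (s : Finset ι) (w t : ι → ℝ) :
    0 ≤ ∑ i ∈ s, ∑ j ∈ s, w i * w j * cos (t i - t j) := by
  have h : ∑ i ∈ s, ∑ j ∈ s, w i * w j * cos (t i - t j) =
      (∑ i ∈ s, w i * cos (t i)) ^ 2 + (∑ i ∈ s, w i * sin (t i)) ^ 2 := by
    simp only [sq, sum_mul_sum, ← sum_add_distrib, cos_sub]
    exact sum_congr rfl fun i _ => sum_congr rfl fun j _ => by ring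
  rw [h]
  positivity

theorem sum_sum_mul_norm_sub_le {ι : Type*} (s : Finset ι) (w : ι → ℝ) (θ : ι → UnitAddCircle) :
    ∑ i ∈ s, ∑ j ∈ s, w i * w j * ‖θ i - θ j‖ ≤ (∑ i ∈ s, w i) ^ 2 / 4 := by
  choose t ht using fun i => QuotientAddGroup.mk_surjective (θ i)
  obtain rfl : θ = fun i => ((t i : ℝ) : UnitAddCircle) := funext fun i => (ht i).symm
  have hsum := hasSum_sum fun i (_ : i ∈ s) => hasSum_sum fun j (_ : j ∈ s) =>
    (hasSum_norm_unitAddCircle (t i - t j)).mul_left (w i * w j)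
  have hnonneg := hsum.nonneg fun k => by
    have hk : 0 ≤ (1 - (-1) ^ k) / (π ^ 2 * k ^ 2) := by
      rcases neg_one_pow_eq_or ℝ k with h | h <;> rw [h] <;> positivity
    have := mul_nonneg hk (sum_sum_mul_cos_sub_nonneg s w fun i => 2 * π * k * t i)
    simp only [mul_sum] at this
    convert this using 3 with i _ j _
    ring_nf
  simp only [← AddCircle.coe_sub, mul_sub, sum_sub_distrib, ← sum_mul, ← sum_mul_sum] at hnonneg ⊢
  linarith

theorem mul_norm_coe_div_eq_min {a L : ℝ} (ha : 0 ≤ a) (haL : a ≤ L) :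
    L * ‖((a / L : ℝ) : UnitAddCircle)‖ = min a (L - a) := by
  rcases haL.lt_or_eq with haL | rfl
  · have hL : 0 < L := ha.trans_lt haL
    rw [norm_coe_unitAddCircle, Int.fract_eq_self.2 ⟨by positivity, (div_lt_one hL).2 haL⟩,
      mul_min_of_nonneg _ _ hL.le]
    field_simp
  · rcases ha.eq_or_lt with rfl | ha
    · simp
    · simp [ha.ne', ha.le, AddCircle.coe_period]

theorem exists_weights_of_mem_convexHull_image {ι E : Type*} [AddCommGroup E] [Module ℝ E]
    {t : Finset ι} {x : ι → E} {z : E} (h : z ∈ convexHull ℝ (x '' t)) :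
    ∃ w : ι → ℝ, (∀ i ∈ t, 0 ≤ w i) ∧ ∑ i ∈ t, w i = 1 ∧ ∑ i ∈ t, w i • x i = z := by
  classical
  obtain ⟨κ, _, v, y, hv0, hv1, hy, rfl⟩ := mem_convexHull_iff_exists_fintype.1 h
  choose g hgt hxg using hy
  refine ⟨fun i => ∑ k with g k = i, v k, fun i _ => sum_nonneg fun k _ => hv0 k, ?_, ?_⟩
  · rwa [sum_fiberwise_of_maps_to fun k _ => hgt k]
  · simp_rw [sum_smul]
    rw [← sum_fiberwise_of_maps_to (g := g) (fun k _ => hgt k)]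
    refine sum_congr rfl fun i _ => sum_congr rfl fun k hk => ?_
    rw [← hxg k, (mem_filter.1 hk).2]

theorem sum_smul_sub_eq_self {ι R M : Type*} [Ring R] [AddCommGroup M] [Module R M]
    {s : Finset ι} {w : ι → R} {z : ι → M} (hw : ∑ i ∈ s, w i = 1)
    (hz : ∑ i ∈ s, w i • z i = 0) (y : M) : ∑ i ∈ s, w i • (y - z i) = y := by
  simp only [smul_sub, sum_sub_distrib, ← sum_smul, hw, one_smul, hz, sub_zero]

theorem eq_neg_of_ne_of_eq_or_eq_neg {G : Type*} [AddGroup G] {b u v : G} (hu : u = b ∨ u = -b)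
    (hv : v = b ∨ v = -b) (hne : v ≠ u) : v = -u := by
  rcases hu with rfl | rfl <;> rcases hv with rfl | rfl <;> simp_all

namespace Seminorm

variable {E : Type*} [AddCommGroup E] [Module ℝ E] (p : Seminorm ℝ E)

theorem eq_or_eq_neg_of_sameRay_sub {y z : E} (hy : p y = 1) (hz : p z = 1)
    (h : SameRay ℝ y (y - z)) : z = y ∨ z = -y := by
  have hy0 : y ≠ 0 := by
    rintro rfl
    simp at hy
  obtain ⟨r, -, hr⟩ := h.exists_nonneg_left hy0
  have hzr : z = (1 - r) • y := by rw [sub_smul, one_smul, hr, sub_sub_cancel]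
  rw [hzr, map_smul_eq_mul, hy, mul_one, Real.norm_eq_abs] at hz
  rcases (abs_eq zero_le_one).1 hz with h | h
  · left; rw [hzr, h, one_smul]
  · right; rw [hzr, h, neg_one_smul]

theorem map_neg_sub_self (v : E) : p (-v - v) = 2 * p v := by
  rw [← neg_add', ← two_smul ℝ, map_neg_eq_map, map_smul_eq_mul, Real.norm_two]

variable (m : ℕ) (x : ℕ → E)

noncomputable def arcLength (k : ℕ) : ℝ := ∑ i ∈ range k, p (x ((i + 1) % m) - x i)

theorem arcLength_mono {i j : ℕ} (h : i ≤ j) : p.arcLength m x i ≤ p.arcLength m x j :=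
  sum_le_sum_of_subset_of_nonneg (range_subset_range.2 h) fun _ _ _ => apply_nonneg _ _

theorem sub_le_arcLength_sub {i j : ℕ} (hij : i ≤ j) (hjm : j ≤ m) :
    p (x (j % m) - x (i % m)) ≤ p.arcLength m x j - p.arcLength m x i := by
  induction j, hij using Nat.le_induction with
  | base => simp
  | succ j hij ih =>
    have hj : j % m = j := Nat.mod_eq_of_lt (by omega)
    have htri := map_add_le_add p (x ((j + 1) % m) - x (j % m)) (x (j % m) - x (i % m))
    rw [sub_add_sub_cancel, hj] at htri
    have ih := ih (by omega)
    rw [hj] at ih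
    rw [arcLength, sum_range_succ, ← arcLength]
    linarith

theorem sub_le_min_arcLength {i j : ℕ} (hij : i ≤ j) (hjm : j < m) :
    p (x j - x i) ≤ min (p.arcLength m x j - p.arcLength m x i)
      (p.arcLength m x m - (p.arcLength m x j - p.arcLength m x i)) := by
  have hi : i % m = i := Nat.mod_eq_of_lt (by omega)
  have hj : j % m = j := Nat.mod_eq_of_lt hjm
  have hji := p.sub_le_arcLength_sub m x hij hjm.le
  have h0i := p.sub_le_arcLength_sub m x (Nat.zero_le i) (by omega)
  have hjm' := p.sub_le_arcLength_sub m x hjm.le le_rfl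
  -- the complementary arc, from `x j` round to `x i`, passes through `x 0`
  have htri := map_add_le_add p (x i - x 0) (x 0 - x j)
  rw [sub_add_sub_cancel, map_sub_rev] at htri
  simp only [hi, hj, Nat.zero_mod, Nat.mod_self] at hji h0i hjm'
  simp only [arcLength, range_zero, sum_empty] at h0i
  exact le_min hji (by simp only [arcLength] at *; linarith)

theorem sub_le_mul_norm_coe {i j : ℕ} (hi : i < m) (hj : j < m) :
    p (x i - x j) ≤ p.arcLength m x m *
      ‖(((p.arcLength m x i - p.arcLength m x j) / p.arcLength m x m : ℝ) : UnitAddCircle)‖ := by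
  wlog hji : j ≤ i generalizing i j
  · rw [map_sub_rev, ← norm_neg, ← AddCircle.coe_neg, ← neg_div, neg_sub]
    exact this hj hi (by omega)
  rw [mul_norm_coe_div_eq_min (by linarith [p.arcLength_mono m x hji])
    (by linarith [p.arcLength_mono m x hi.le, p.arcLength_mono m x (Nat.zero_le j),
      show p.arcLength m x 0 = 0 from sum_range_zero _])]
  exact p.sub_le_min_arcLength m x hji hi

theorem sum_sum_mul_sub_le (w : ℕ → ℝ) (hw : ∀ i ∈ range m, 0 ≤ w i) :
    ∑ i ∈ range m, ∑ j ∈ range m, w i * w j * p (x i - x j) ≤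
      p.arcLength m x m / 4 * (∑ i ∈ range m, w i) ^ 2 := by
  set L := p.arcLength m x m
  set θ : ℕ → UnitAddCircle := fun i => ((p.arcLength m x i / L : ℝ) : UnitAddCircle)
  calc ∑ i ∈ range m, ∑ j ∈ range m, w i * w j * p (x i - x j)
      ≤ ∑ i ∈ range m, ∑ j ∈ range m, w i * w j * (L * ‖θ i - θ j‖) := by
        refine sum_le_sum fun i hi => sum_le_sum fun j hj => ?_
        refine mul_le_mul_of_nonneg_left ?_ (mul_nonneg (hw i hi) (hw j hj))
        rw [← AddCircle.coe_sub, ← sub_div]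
        exact p.sub_le_mul_norm_coe m x (mem_range.1 hi) (mem_range.1 hj)
    _ = L * ∑ i ∈ range m, ∑ j ∈ range m, w i * w j * ‖θ i - θ j‖ := by
        simp only [mul_sum]
        exact sum_congr rfl fun _ _ => sum_congr rfl fun _ _ => by ring
    _ ≤ L * ((∑ i ∈ range m, w i) ^ 2 / 4) :=
        mul_le_mul_of_nonneg_left (sum_sum_mul_norm_sub_le _ w θ)
          (sum_nonneg fun _ _ => apply_nonneg _ _)
    _ = L / 4 * (∑ i ∈ range m, w i) ^ 2 := by ring

theorem add_add_le_arcLength {i j k : ℕ} (hi : i < m) (hj : j < m) (hk : k < m) :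
    p (x i - x j) + p (x j - x k) + p (x k - x i) ≤ p.arcLength m x m := by
  have sorted : ∀ a b c, a ≤ b → b ≤ c → c < m →
      p (x a - x b) + p (x b - x c) + p (x c - x a) ≤ p.arcLength m x m := by
    intro a b c hab hbc hc
    have h1 := (p.sub_le_min_arcLength m x hab (by omega)).trans (min_le_left _ _)
    have h2 := (p.sub_le_min_arcLength m x hbc hc).trans (min_le_left _ _)
    have h3 := (p.sub_le_min_arcLength m x (hab.trans hbc) hc).trans (min_le_right _ _)
    rw [map_sub_rev] at h1 h2
    linarith
  -- the cyclic sum is invariant under permutations of `i, j, k`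
  have hsymm : ∀ a b, p (x a - x b) = p (x b - x a) := fun a b => map_sub_rev p _ _
  rcases le_total i j with hij | hij <;> rcases le_total j k with hjk | hjk <;>
    rcases le_total i k with hik | hik
  all_goals first
    | linarith [sorted i j k hij hjk hk, hsymm i j, hsymm j k, hsymm i k]
    | linarith [sorted i k j hik (by omega) hj, hsymm i j, hsymm j k, hsymm i k]
    | linarith [sorted j i k hij hik hk, hsymm i j, hsymm j k, hsymm i k]
    | linarith [sorted j k i hjk (by omega) hi, hsymm i j, hsymm j k, hsymm i k]
    | linarith [sorted k i j hik hij hj, hsymm i j, hsymm j k, hsymm i k]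
    | linarith [sorted k j i hjk hij hi, hsymm i j, hsymm j k, hsymm i k]

theorem map_eq_one_and_map_sum_eq_of_arcLength_le_four {w : ℕ → ℝ} (hw0 : ∀ i ∈ range m, 0 ≤ w i)
    (hw1 : ∑ i ∈ range m, w i = 1) (hwx : ∑ i ∈ range m, w i • x i = 0)
    (hout : ∀ i < m, 1 ≤ p (x i)) (hL : p.arcLength m x m ≤ 4) {i : ℕ} (hi : i ∈ range m)
    (hwi : 0 < w i) :
    p (x i) = 1 ∧
      p (∑ j ∈ range m, w j • (x i - x j)) = ∑ j ∈ range m, p (w j • (x i - x j)) := by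
  set g : ℕ → ℝ := fun k => ∑ j ∈ range m, p (w j • (x k - x j))
  have hg : ∀ k ∈ range m, 1 ≤ p (x k) ∧ p (x k) ≤ g k := fun k hk =>
    ⟨hout k (mem_range.1 hk), by
      conv_lhs => rw [← sum_smul_sub_eq_self hw1 hwx (x k)]
      exact le_sum_of_subadditive p (map_zero p).le (map_add_le_add p) _ _⟩
  have hle : ∀ k ∈ range m, w k ≤ w k * g k := fun k hk =>
    le_mul_of_one_le_right (hw0 k hk) ((hg k hk).1.trans (hg k hk).2)
  have hsum : ∑ k ∈ range m, w k * g k ≤ ∑ k ∈ range m, w k :=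
    calc ∑ k ∈ range m, w k * g k
        = ∑ k ∈ range m, ∑ j ∈ range m, w k * w j * p (x k - x j) := by
          refine sum_congr rfl fun k hk => ?_
          simp only [g, mul_sum, map_smul_eq_mul]
          refine sum_congr rfl fun j hj => ?_
          rw [Real.norm_of_nonneg (hw0 j hj), mul_assoc]
      _ ≤ p.arcLength m x m / 4 * (∑ k ∈ range m, w k) ^ 2 := p.sum_sum_mul_sub_le m x w hw0
      _ ≤ ∑ k ∈ range m, w k := by rw [hw1]; linarith
  have hgi : g i = 1 := by
    have h := (sum_eq_sum_iff_of_le hle).1 (le_antisymm (sum_le_sum hle) hsum) i hi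
    exact (mul_eq_left₀ hwi.ne').1 h.symm
  rw [sum_smul_sub_eq_self hw1 hwx]
  obtain ⟨h1, h2⟩ := hg i hi
  exact ⟨by linarith, by linarith⟩

theorem arcLength_eq_two_mul {b : E} (hb : p b = 1) (hvert : ∀ k < m, x k = b ∨ x k = -b)
    (hdist : ∀ k < m, x ((k + 1) % m) ≠ x k) : p.arcLength m x m = 2 * m := by
  have hedge : ∀ k ∈ range m, p (x ((k + 1) % m) - x k) = 2 := fun k hk => by
    have hk := mem_range.1 hk
    rw [eq_neg_of_ne_of_eq_or_eq_neg (hvert k hk) (hvert _ (Nat.mod_lt _ (by omega)))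
      (hdist k hk), p.map_neg_sub_self]
    rcases hvert k hk with h | h <;> simp [h, hb]
  rw [arcLength, sum_congr rfl hedge]
  simp [mul_comm]

end Seminorm

section StrictConvexBody

variable {E : Type*} [NormedAddCommGroup E] [NormedSpace ℝ E] {K : Set E}

theorem mem_of_gauge_le_one (hconv : Convex ℝ K) (hK0 : K ∈ 𝓝 0) (hclosed : IsClosed K) {v : E}
    (hv : gauge K v ≤ 1) : v ∈ K := by
  simpa [hclosed.closure_eq] using (gauge_le_one_iff_mem_closure hconv hK0).1 hv

theorem eq_or_eq_of_mem_segment_of_one_le_gauge (hstrict : StrictConvex ℝ K) {a c v : E}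
    (ha : a ∈ K) (hc : c ∈ K) (hv : v ∈ segment ℝ a c) (h1 : 1 ≤ gauge K v) : v = a ∨ v = c := by
  by_contra! hne
  have hac : a ≠ c := by
    rintro rfl
    exact hne.1 (by simpa using hv)
  have hint := hstrict.openSegment_subset ha hc hac
    (mem_openSegment_of_ne_left_right hne.1.symm hne.2.symm hv)
  exact (interior_subset_gauge_lt_one K hint).not_ge h1

variable (hconv : Convex ℝ K) (hK0 : K ∈ 𝓝 0) (hcpt : IsCompact K) (hstrict : StrictConvex ℝ K)
include hconv hK0 hcpt hstrict

theorem sameRay_of_gauge_add_eq {u v : E} (h : gauge K (u + v) = gauge K u + gauge K v) :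
    SameRay ℝ u v := by
  rcases eq_or_ne u 0 with rfl | hu
  · exact .zero_left v
  rcases eq_or_ne v 0 with rfl | hv
  · exact .zero_right u
  have hpos : ∀ y : E, y ≠ 0 → 0 < gauge K y := fun y hy => (gauge_pos (absorbent_nhds_zero hK0)
    ((NormedSpace.isVonNBounded_iff ℝ).2 hcpt.isBounded)).2 hy
  have hunit : ∀ y : E, 0 < gauge K y → (gauge K y)⁻¹ • y ∈ K := fun y hy =>
    mem_of_gauge_le_one hconv hK0 hcpt.isClosed <| by
      rw [gauge_smul_of_nonneg (inv_nonneg.2 hy.le), smul_eq_mul, inv_mul_cancel₀ hy.ne']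
  have ha := hpos u hu
  have hb := hpos v hv
  set a := gauge K u
  set b := gauge K v
  by_contra hne
  have hne' : a⁻¹ • u ≠ b⁻¹ • v := fun heq =>
    hne (Or.inr (Or.inr ⟨a⁻¹, b⁻¹, inv_pos.2 ha, inv_pos.2 hb, heq⟩))
  have hint := hstrict (hunit u ha) (hunit v hb) hne' (div_pos ha (add_pos ha hb))
    (div_pos hb (add_pos ha hb)) (by field_simp)
  have hcomb : (a / (a + b)) • a⁻¹ • u + (b / (a + b)) • b⁻¹ • v = (a + b)⁻¹ • (u + v) := by
    rw [smul_smul, smul_smul, smul_add]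
    congr 2 <;> field_simp
  have hlt := interior_subset_gauge_lt_one K (hcomb ▸ hint)
  rw [Set.mem_ofPred_eq, gauge_smul_of_nonneg (by positivity), smul_eq_mul, h,
    inv_mul_cancel₀ (by positivity)] at hlt
  exact lt_irrefl _ hlt

theorem sameRay_of_gauge_sum_eq {ι : Type*} (s : Finset ι) (u : ι → E)
    (h : gauge K (∑ i ∈ s, u i) = ∑ i ∈ s, gauge K (u i)) {j : ι} (hj : j ∈ s) :
    SameRay ℝ (u j) (∑ i ∈ s, u i) := by
  classical
  have habs : Absorbent ℝ K := absorbent_nhds_zero hK0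
  rw [← add_sum_erase s u hj] at h ⊢
  rw [← add_sum_erase s (fun i => gauge K (u i)) hj] at h
  have hrest := gauge_sum_le hconv habs (s.erase j) u
  have htri := gauge_add_le hconv habs (u j) (∑ i ∈ s.erase j, u i)
  exact (SameRay.refl _).add_right
    (sameRay_of_gauge_add_eq hconv hK0 hcpt hstrict (by linarith))

theorem mem_segment_of_gauge_add_le {a c v : E}
    (h : gauge K (v - a) + gauge K (c - v) ≤ gauge K (c - a)) : v ∈ segment ℝ a c := by
  rw [mem_segment_iff_sameRay]
  refine sameRay_of_gauge_add_eq hconv hK0 hcpt hstrict (le_antisymm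
    (gauge_add_le hconv (absorbent_nhds_zero hK0) _ _) ?_)
  rwa [sub_add_sub_cancel']

theorem exists_antipodal_vertices (hbal : Balanced ℝ K) {m : ℕ} {x : ℕ → E}
    (hout : ∀ i < m, 1 ≤ gauge K (x i)) (hx0 : (0 : E) ∈ convexHull ℝ (x '' ↑(range m)))
    (hlen : ∑ i ∈ range m, gauge K (x ((i + 1) % m) - x i) ≤ 4) :
    ∃ i < m, ∃ j < m, gauge K (x i) = 1 ∧ x j = -x i := by
  set p := gaugeSeminorm hbal hconv (absorbent_nhds_zero hK0)
  obtain ⟨w, hw0, hw1, hwx⟩ := exists_weights_of_mem_convexHull_image hx0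
  have heq := fun {i} =>
    p.map_eq_one_and_map_sum_eq_of_arcLength_le_four m x hw0 hw1 hwx hout hlen (i := i)
  obtain ⟨i, hi, hwi⟩ : ∃ i ∈ range m, 0 < w i := exists_lt_of_sum_lt (by simp [hw1])
  have hsupp : ∀ j ∈ range m, 0 < w j → x j = x i ∨ x j = -x i := by
    intro j hj hwj
    have hray := sameRay_of_gauge_sum_eq hconv hK0 hcpt hstrict _ _ (heq hi hwi).2 hj
    rw [sum_smul_sub_eq_self hw1 hwx] at hray
    refine p.eq_or_eq_neg_of_sameRay_sub (heq hi hwi).1 (heq hj hwj).1 ?_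
    simpa [hwj.ne'] using hray.symm.pos_smul_right (inv_pos.2 hwj)
  obtain ⟨j, hj, hxj⟩ : ∃ j ∈ range m, x j = -x i := by
    by_contra! hne
    have hxi : ∑ j ∈ range m, w j • x j = x i := by
      rw [← one_smul ℝ (x i), ← hw1, sum_smul]
      refine sum_congr rfl fun j hj => ?_
      rcases (hw0 j hj).eq_or_lt with h | h
      · simp [← h]
      · rw [(hsupp j hj h).resolve_right (hne j hj)]
    have := (heq hi hwi).1
    rw [← hxi, hwx, map_zero] at this
    exact zero_ne_one this
  exact ⟨i, mem_range.1 hi, j, mem_range.1 hj, (heq hi hwi).1, hxj⟩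

theorem eq_or_eq_neg_of_antipodal_vertices (hbal : Balanced ℝ K) {m : ℕ} {x : ℕ → E}
    (hout : ∀ i < m, 1 ≤ gauge K (x i))
    (hlen : ∑ i ∈ range m, gauge K (x ((i + 1) % m) - x i) ≤ 4) {i j k : ℕ} (hi : i < m)
    (hj : j < m) (hk : k < m) (hxi : gauge K (x i) = 1) (hxj : x j = -x i) :
    x k = x i ∨ x k = -x i := by
  set p := gaugeSeminorm hbal hconv (absorbent_nhds_zero hK0)
  have hL : p.arcLength m x m ≤ 4 := hlen
  have hpi : p (x i) = 1 := hxi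
  have htri := p.add_add_le_arcLength m x hi hj hk
  have hji := p.map_neg_sub_self (x i)
  rw [← hxj] at hji
  rw [map_sub_rev p (x i)] at htri
  have hxiK : x i ∈ K := mem_of_gauge_le_one hconv hK0 hcpt.isClosed hxi.le
  rw [← hxj]
  refine eq_or_eq_of_mem_segment_of_one_le_gauge hstrict hxiK (hxj ▸ hbal.neg_mem_iff.2 hxiK)
    (mem_segment_of_gauge_add_le hconv hK0 hcpt hstrict ?_) (hout k hk)
  change p (x k - x i) + p (x j - x k) ≤ p (x j - x i)
  linarith

end StrictConvexBody

theorem stmt4_general {n m : ℕ} (K : Set (EuclideanSpace ℝ (Fin n)))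
    (hKconv : Convex ℝ K) (hKcpt : IsCompact K) (hK0 : (0 : EuclideanSpace ℝ (Fin n)) ∈ interior K)
    (hKsymm : K = -K) (hKstrict : StrictConvex ℝ K)
    (x : ℕ → EuclideanSpace ℝ (Fin n))
    (hout : ∀ i < m, 1 ≤ gauge K (x i))
    (hdist : ∀ i < m, x ((i + 1) % m) ≠ x i)
    (h0 : (0 : EuclideanSpace ℝ (Fin n)) ∈ convexHull ℝ (x '' Set.Iio m))
    (hlen : KLength K m x = 4) :
    m = 2 ∧ x 1 = -x 0 ∧ gauge K (x 0) = 1 := by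
  have hK0' : K ∈ 𝓝 0 := mem_interior_iff_mem_nhds.1 hK0
  have hbal : Balanced ℝ K := (balanced_iff_neg_mem hKconv).2 fun a ha => by
    rw [hKsymm]
    exact Set.neg_mem_neg.2 ha
  rw [← coe_range] at h0
  obtain ⟨i, hi, j, hj, hxi, hxj⟩ :=
    exists_antipodal_vertices hKconv hK0' hKcpt hKstrict hbal hout h0 hlen.le
  have hvert : ∀ k < m, x k = x i ∨ x k = -x i := fun k hk =>
    eq_or_eq_neg_of_antipodal_vertices hKconv hK0' hKcpt hKstrict hbal hout hlen.le hi hj hk hxi hxj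
  set p := gaugeSeminorm hbal hKconv (absorbent_nhds_zero hK0')
  have hm : (2 * m : ℝ) = 4 := (p.arcLength_eq_two_mul m x hxi hvert hdist).symm.trans hlen
  obtain rfl : m = 2 := by exact_mod_cast (by linarith : (m : ℝ) = 2)
  refine ⟨rfl, eq_neg_of_ne_of_eq_or_eq_neg (hvert 0 two_pos) (hvert 1 one_lt_two)
    (hdist 0 two_pos), ?_⟩
  rcases hvert 0 two_pos with h | h <;> rw [h]
  exacts [hxi, (gauge_neg (fun _ => hbal.neg_mem_iff.2) _).trans hxi]

/-- Equality case for a strictly convex centrally symmetric body `K`: if the vertices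
`x 0, …, x (m-1)` (`m ≥ 2`, consecutive vertices distinct) lie outside the interior of
`K`, `0` lies in their convex hull, and the closed polygon has `K`-length exactly `4`,
then `m = 2` and the polygon consists of two antipodal boundary points of `K`. -/
theorem stmt4 {n m : ℕ} (K : Set (EuclideanSpace ℝ (Fin n)))
    (hKconv : Convex ℝ K) (hKcpt : IsCompact K) (hK0 : (0 : EuclideanSpace ℝ (Fin n)) ∈ interior K)
    (hKsymm : K = -K) (hKstrict : StrictConvex ℝ K) (hm : 2 ≤ m)
    (x : ℕ → EuclideanSpace ℝ (Fin n))
    (hout : ∀ i < m, 1 ≤ gauge K (x i))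
    (hdist : ∀ i < m, x ((i + 1) % m) ≠ x i)
    (h0 : (0 : EuclideanSpace ℝ (Fin n)) ∈ convexHull ℝ (x '' Set.Iio m))
    (hlen : KLength K m x = 4) :
    m = 2 ∧ x 1 = -x 0 ∧ gauge K (x 0) = 1 :=
  stmt4_general K hKconv hKcpt hK0 hKsymm hKstrict x hout hdist h0 hlen
end

section
/- Let K be a centrally symmetric convex body in ℝⁿ and let x₁,…,x_m ∈ ℝⁿ, m ≥ 3, with 0 ∈ conv{x₁,…,x_m}, and suppose there exists p with p ∈ conv{x_{i₀},…,x_{j₀}} and −p ∈ conv{x_{j₀},…,x_{i₀}} (cyclic blocks, 1 ≤ i₀ < j₀ ≤ m). Then the K-length of the closed polygon x₁⋯x_m is at least ‖p−x_{i₀}‖_K + ‖x_{j₀}−p‖_K + ‖−p−x_{j₀}‖_K + ‖x_{i₀}+p‖_K. -/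
/-!
For a convex absorbent `K`, the function `q ↦ ‖q - a‖_K + ‖b - q‖_K` is convex, so on the convex
hull of the vertices of a polygonal path from `a` to `b` it is maximised at a vertex, where the
triangle inequality bounds it by the `K`-length of the path. Cutting the closed polygon at `x i₀`
and `x j₀` into two such paths, and applying this to `p` on one and to `-p` on the other, gives
the bound.
-/

open Finset

section Gauge

variable {E : Type*} [AddCommGroup E] [Module ℝ E] {K : Set E}

theorem convexOn_gauge (hK : Convex ℝ K) (habs : Absorbent ℝ K) : ConvexOn ℝ Set.univ (gauge K) :=
  ⟨convex_univ, fun u _ v _ s t hs ht _ => by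
    simpa only [gauge_smul_of_nonneg hs, gauge_smul_of_nonneg ht, smul_eq_mul]
      using gauge_add_le hK habs (s • u) (t • v)⟩

theorem convexOn_gauge_sub_add_gauge_sub (hK : Convex ℝ K) (habs : Absorbent ℝ K) (a b : E) :
    ConvexOn ℝ Set.univ (fun q => gauge K (q - a) + gauge K (b - q)) :=
  ((convexOn_gauge hK habs).comp_affineMap (AffineMap.id ℝ E - AffineMap.const ℝ E a)).add
    ((convexOn_gauge hK habs).comp_affineMap (AffineMap.const ℝ E b - AffineMap.id ℝ E))

theorem gauge_sub_le_sum_Ico (hK : Convex ℝ K) (habs : Absorbent ℝ K) (y : ℕ → E) {a b : ℕ}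
    (hab : a ≤ b) : gauge K (y b - y a) ≤ ∑ i ∈ Ico a b, gauge K (y (i + 1) - y i) := by
  rw [← sum_Ico_sub y hab]
  exact le_sum_of_subadditive _ gauge_zero.le (gauge_add_le hK habs) _ _

theorem gauge_sub_add_gauge_sub_le_sum_Ico (hK : Convex ℝ K) (habs : Absorbent ℝ K) (y : ℕ → E)
    {a b : ℕ} {p : E} (hp : p ∈ convexHull ℝ (y '' Set.Icc a b)) :
    gauge K (p - y a) + gauge K (y b - p) ≤ ∑ i ∈ Ico a b, gauge K (y (i + 1) - y i) := by
  obtain ⟨_, ⟨k, hk, rfl⟩, hpk⟩ :=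
    (convexOn_gauge_sub_add_gauge_sub hK habs (y a) (y b)).exists_ge_of_mem_convexHull
      (Set.subset_univ _) hp
  calc gauge K (p - y a) + gauge K (y b - p)
      ≤ gauge K (y k - y a) + gauge K (y b - y k) := hpk
    _ ≤ (∑ i ∈ Ico a k, gauge K (y (i + 1) - y i)) + ∑ i ∈ Ico k b, gauge K (y (i + 1) - y i) :=
      add_le_add (gauge_sub_le_sum_Ico hK habs y hk.1) (gauge_sub_le_sum_Ico hK habs y hk.2)
    _ = ∑ i ∈ Ico a b, gauge K (y (i + 1) - y i) := sum_Ico_consecutive _ hk.1 hk.2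

end Gauge

theorem Finset.sum_Ico_mod_eq_sum_range {M : Type*} [AddCommMonoid M] (f : ℕ → M) (a m : ℕ) :
    ∑ i ∈ Ico a (a + m), f (i % m) = ∑ i ∈ range m, f i := by
  rw [← Nat.image_Ico_mod a m, sum_image (Nat.mod_injOn_Ico a m)]

theorem KLength_eq_sum_Ico {n : ℕ} (K : Set (EuclideanSpace ℝ (Fin n))) (m : ℕ)
    (x : ℕ → EuclideanSpace ℝ (Fin n)) (a : ℕ) :
    KLength K m x = ∑ i ∈ Ico a (a + m), gauge K (x ((i + 1) % m) - x (i % m)) := by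
  rw [KLength, ← sum_Ico_mod_eq_sum_range _ a m]
  exact sum_congr rfl fun i _ => by rw [Nat.mod_add_mod]

theorem stmt8_general {n m : ℕ} (K : Set (EuclideanSpace ℝ (Fin n)))
    (hKconv : Convex ℝ K) (hK0 : (0 : EuclideanSpace ℝ (Fin n)) ∈ interior K)
    (x : ℕ → EuclideanSpace ℝ (Fin n))
    (i₀ j₀ : ℕ) (hij : i₀ < j₀) (hjm : j₀ < m) (p : EuclideanSpace ℝ (Fin n))
    (hp : p ∈ convexHull ℝ (x '' Set.Icc i₀ j₀))
    (hmp : -p ∈ convexHull ℝ (x '' (Set.Icc j₀ (m - 1) ∪ Set.Icc 0 i₀))) :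
    gauge K (p - x i₀) + gauge K (x j₀ - p) + gauge K (-p - x j₀) + gauge K (x i₀ + p)
      ≤ KLength K m x := by
  have habs : Absorbent ℝ K := absorbent_nhds_zero (mem_interior_iff_mem_nhds.mp hK0)
  -- the periodic extension turns the complementary block into the path `y j₀, …, y (i₀ + m)`
  let y : ℕ → EuclideanSpace ℝ (Fin n) := fun i => x (i % m)
  have hy : ∀ k < m, y k = x k := fun k hk => congrArg x (Nat.mod_eq_of_lt hk)
  have hy_add : ∀ k < m, y (k + m) = x k := fun k hk => by simpa [y] using hy k hk
  have hblock : x '' Set.Icc i₀ j₀ ⊆ y '' Set.Icc i₀ j₀ := by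
    rintro _ ⟨k, hk, rfl⟩
    exact ⟨k, hk, hy k (by grind)⟩
  have hcoblock : x '' (Set.Icc j₀ (m - 1) ∪ Set.Icc 0 i₀) ⊆ y '' Set.Icc j₀ (i₀ + m) := by
    rintro _ ⟨k, hk | hk, rfl⟩ <;> rw [Set.mem_Icc] at hk
    · exact ⟨k, by grind, hy k (by omega)⟩
    · exact ⟨k + m, by grind, hy_add k (by omega)⟩
  have h₁ := gauge_sub_add_gauge_sub_le_sum_Ico hKconv habs y (convexHull_mono hblock hp)
  have h₂ := gauge_sub_add_gauge_sub_le_sum_Ico hKconv habs y (convexHull_mono hcoblock hmp)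
  rw [hy i₀ (by omega), hy j₀ hjm] at h₁
  rw [hy j₀ hjm, hy_add i₀ (by omega), sub_neg_eq_add] at h₂
  rw [KLength_eq_sum_Ico K m x i₀, ← sum_Ico_consecutive _ hij.le (by omega : j₀ ≤ i₀ + m)]
  linarith

/-- If `0 ∈ conv{x 0, …, x (m-1)}` (`m ≥ 3`) and there are indices `i₀ < j₀ < m` and a
point `p` with `p` in the convex hull of the cyclic block `x i₀, …, x j₀` and `-p` in
the convex hull of the complementary cyclic block `x j₀, …, x (m-1), x 0, …, x i₀`,
then the `K`-length of the closed polygon is at least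
`‖p − x i₀‖_K + ‖x j₀ − p‖_K + ‖−p − x j₀‖_K + ‖x i₀ + p‖_K`. -/
theorem stmt8 {n m : ℕ} (K : Set (EuclideanSpace ℝ (Fin n)))
    (hKconv : Convex ℝ K) (hKcpt : IsCompact K) (hK0 : (0 : EuclideanSpace ℝ (Fin n)) ∈ interior K)
    (hKsymm : K = -K) (hm : 3 ≤ m)
    (x : ℕ → EuclideanSpace ℝ (Fin n))
    (h0 : (0 : EuclideanSpace ℝ (Fin n)) ∈ convexHull ℝ (x '' Set.Iio m))
    (i₀ j₀ : ℕ) (hij : i₀ < j₀) (hjm : j₀ < m) (p : EuclideanSpace ℝ (Fin n))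
    (hp : p ∈ convexHull ℝ (x '' Set.Icc i₀ j₀))
    (hmp : -p ∈ convexHull ℝ (x '' (Set.Icc j₀ (m - 1) ∪ Set.Icc 0 i₀))) :
    gauge K (p - x i₀) + gauge K (x j₀ - p) + gauge K (-p - x j₀) + gauge K (x i₀ + p)
      ≤ KLength K m x :=
  stmt8_general K hKconv hK0 x i₀ j₀ hij hjm p hp hmp
end
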